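/- Let ((Ω,ℱ,P),(ℱ_{s,t})_{s≤t}) be a continuous factorization over ℝ, let f ∈ L²(Ω,ℱ,P), and let g = η ∘ f where η : ℝ → ℝ satisfies |η(x) − η(y)| ≤ |x − y| for all x, y ∈ ℝ (so that g ∈ L²(Ω,ℱ,P)). Then μ_g({M ∈ 𝒞 : M ⊈ E}) ≤ μ_f({M ∈ 𝒞 : M ⊈ E}) for every elementary set E ⊆ ℝ, i.e. μ_g(𝒞 ∖ ℳ_E) ≤ μ_f(𝒞 ∖ ℳ_E). -/

import Mathlib

open MeasureTheory ProbabilityTheory Filter Set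

noncomputable section

/-- The space `𝒞` of compact subsets of `ℝ`. -/
def SpectralSpaceCpt : Type := {A : Set ℝ // IsCompact A}

/-- The Borel σ-algebra of the space of compact subsets of `ℝ` (with the topology of the
Hausdorff-type metric described in the paper); it is generated by the sets
`{K | K ∩ U ≠ ∅}` for `U ⊆ ℝ` open. -/
instance : MeasurableSpace SpectralSpaceCpt :=
  MeasurableSpace.generateFrom
    {S : Set SpectralSpaceCpt | ∃ U : Set ℝ, IsOpen U ∧ S = {K : SpectralSpaceCpt | (K.1 ∩ U).Nonempty}}

/-- The open interval in `ℝ` with extended-real endpoints. -/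
def erealIoo (a b : EReal) : Set ℝ := {x : ℝ | a < (x : EReal) ∧ (x : EReal) < b}

/-- An elementary subset of `ℝ`: a finite union of pairwise disjoint open intervals with
endpoints in `ℝ ∪ {−∞, +∞}`. -/
structure Elementary where
  n : ℕ
  a : Fin n → EReal
  b : Fin n → EReal
  disj : ∀ i j : Fin n, i ≠ j → Disjoint (erealIoo (a i) (b i)) (erealIoo (a j) (b j))

/-- The subset of `ℝ` described by an elementary set. -/
def Elementary.set (E : Elementary) : Set ℝ := ⋃ i, erealIoo (E.a i) (E.b i)

/-- A continuous factorization of the probability space `(Ω, m, P)` over `ℝ`: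
sub-σ-fields `F s t ⊆ m` for `s ≤ t` such that (a) for `r ≤ s ≤ t`, `F r s` and `F s t`
are independent and generate `F r t`; (b) for `s < t`, `⋃_{ε>0} F (s+ε) (t-ε)`
generates `F s t`; (c) `⋃ₙ F (-n) n` generates `m`. -/
structure ContinuousFactorization (Ω : Type) {m : MeasurableSpace Ω} (P : Measure Ω) where
  F : ℝ → ℝ → MeasurableSpace Ω
  le_ambient : ∀ s t : ℝ, F s t ≤ m
  indep : ∀ r s t : ℝ, r ≤ s → s ≤ t → ProbabilityTheory.Indep (F r s) (F s t) P
  sup_eq : ∀ r s t : ℝ, r ≤ s → s ≤ t → F r t = F r s ⊔ F s t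
  continuity : ∀ s t : ℝ, s < t → F s t = ⨆ (ε : ℝ) (_ : 0 < ε), F (s + ε) (t - ε)
  ambient_eq : (⨆ n : ℕ, F (-(n : ℝ)) (n : ℝ)) = m

namespace ContinuousFactorization

variable {Ω : Type} {m : MeasurableSpace Ω} {P : Measure Ω}

/-- The sub-σ-field attached to the interval with extended-real endpoints `a`, `b`;
for real `a ≤ b` it coincides with `F a b`, and it realizes `ℱ_{−∞,t}`, `ℱ_{s,∞}`,
`ℱ_{−∞,∞}` for infinite endpoints. -/
def FI (CF : ContinuousFactorization Ω P) (a b : EReal) : MeasurableSpace Ω :=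
  ⨆ (s : ℝ) (t : ℝ) (_ : s ≤ t) (_ : a ≤ (s : EReal)) (_ : (t : EReal) ≤ b), CF.F s t

/-- The sub-σ-field `ℱ_E` attached to an elementary set `E`. -/
def FE (CF : ContinuousFactorization Ω P) (E : Elementary) : MeasurableSpace Ω :=
  ⨆ i, CF.FI (E.a i) (E.b i)

/-- `μ` is the spectral measure of `f`: a finite Borel measure on the space of compact
subsets of `ℝ` with `μ {M | M ⊆ E} = ‖E[f | ℱ_E]‖²` for every elementary set `E`. -/
def IsSpectralMeasure (CF : ContinuousFactorization Ω P) (f : Ω → ℝ)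
    (μ : Measure SpectralSpaceCpt) : Prop :=
  IsFiniteMeasure μ ∧
    ∀ E : Elementary,
      μ {M : SpectralSpaceCpt | M.1 ⊆ E.set} = ENNReal.ofReal (∫ ω, (P[f|CF.FE E]) ω ^ 2 ∂P)

end ContinuousFactorization


namespace Stmt17Aux

lemma memℒp_two_condexp {Ω : Type} {𝒢 : MeasurableSpace Ω} [m : MeasurableSpace Ω]
    {P : Measure Ω} [IsProbabilityMeasure P] (hm : 𝒢 ≤ m) {f : Ω → ℝ}
    (hf : MemLp f 2 P) : MemLp (P[f|𝒢]) 2 P := by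
  set F := hf.toLp f with hF
  have hFi : Integrable (F : Ω → ℝ) P := (Lp.memLp F).integrable one_le_two
  have h : (condExpL2 ℝ ℝ hm F : Ω → ℝ) =ᵐ[P] P[(F : Ω → ℝ)|𝒢] := by
    refine ae_eq_condExp_of_forall_setIntegral_eq hm hFi
      (fun s _ _ => ((Lp.memLp _).integrable one_le_two).integrableOn)
      (fun s hs hμs => integral_condExpL2_eq hm F hs hμs.ne) ?_
    exact lpMeas.aestronglyMeasurable _
  have h2 : P[(F : Ω → ℝ)|𝒢] =ᵐ[P] P[f|𝒢] := condExp_congr_ae (hf.coeFn_toLp)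
  exact (Lp.memLp _).ae_eq (h.trans h2)

lemma integrable_mul_of_memL2 {Ω : Type} [m : MeasurableSpace Ω] {P : Measure Ω}
    [IsProbabilityMeasure P] {u v : Ω → ℝ} (hu : MemLp u 2 P) (hv : MemLp v 2 P) :
    Integrable (fun ω => u ω * v ω) P := by
  rw [← memLp_one_iff_integrable]
  have := hv.smul (φ := u) hu (p := 2) (q := 2) (r := 1) (hpqr := ⟨by norm_num [ENNReal.inv_two_add_inv_two]⟩)
  exact this

lemma integral_mul_condexp_eq {Ω : Type} {𝒢 : MeasurableSpace Ω} [m : MeasurableSpace Ω]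
    {P : Measure Ω} [IsProbabilityMeasure P] (hm : 𝒢 ≤ m) {g k : Ω → ℝ}
    (hg : MemLp g 2 P) (hk : MemLp k 2 P) (hkm : AEStronglyMeasurable[𝒢] k P) :
    ∫ ω, g ω * k ω ∂P = ∫ ω, (P[g|𝒢]) ω * k ω ∂P := by
  have hkg : Integrable (k * g) P := by
    exact integrable_mul_of_memL2 hk hg
  have hgi : Integrable g P := hg.integrable one_le_two
  have h1 : P[k * g|𝒢] =ᵐ[P] k * P[g|𝒢] := condExp_mul_of_aestronglyMeasurable_left hkm hkg hgi
  have e1 : ∫ ω, g ω * k ω ∂P = ∫ ω, (k * g) ω ∂P := by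
    congr 1; funext ω; simp [mul_comm]
  have e2 : ∫ ω, (k * g) ω ∂P = ∫ ω, (P[k * g|𝒢]) ω ∂P := (integral_condExp hm).symm
  have e3 : ∫ ω, (P[k * g|𝒢]) ω ∂P = ∫ ω, (k * P[g|𝒢]) ω ∂P := integral_congr_ae h1
  rw [e1, e2, e3]
  congr 1; funext ω; simp [mul_comm]

lemma integral_sq_sub {Ω : Type} [m : MeasurableSpace Ω] {P : Measure Ω}
    [IsProbabilityMeasure P] {u v : Ω → ℝ} (hu : MemLp u 2 P) (hv : MemLp v 2 P) :
    ∫ ω, (u ω - v ω)^2 ∂P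
      = ∫ ω, u ω^2 ∂P - 2 * ∫ ω, u ω * v ω ∂P + ∫ ω, v ω^2 ∂P := by
  have h1 : Integrable (fun ω => u ω^2) P := hu.integrable_sq
  have h2 : Integrable (fun ω => v ω^2) P := hv.integrable_sq
  have h3 : Integrable (fun ω => u ω * v ω) P := integrable_mul_of_memL2 hu hv
  have hpt : ∀ ω, (u ω - v ω)^2 = u ω^2 - 2*(u ω * v ω) + v ω^2 := fun ω => by ring
  have h32 : Integrable (fun ω => 2*(u ω * v ω)) P := h3.const_mul 2
  have h12 : Integrable (fun ω => u ω^2 - 2*(u ω * v ω)) P := h1.sub h32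
  simp_rw [hpt]
  rw [integral_add h12 h2, integral_sub h1 h32, integral_const_mul 2 _]

lemma condexp_contraction {Ω : Type} {𝒢 : MeasurableSpace Ω} [m : MeasurableSpace Ω]
    {P : Measure Ω} [IsProbabilityMeasure P] (hm : 𝒢 ≤ m) {g h : Ω → ℝ}
    (hg : MemLp g 2 P) (hh : MemLp h 2 P) (hhm : AEStronglyMeasurable[𝒢] h P) :
    ∫ ω, g ω^2 ∂P - ∫ ω, (P[g|𝒢]) ω^2 ∂P ≤ ∫ ω, (g ω - h ω)^2 ∂P := by
  set p := P[g|𝒢] with hp_def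
  have hp : MemLp p 2 P := memℒp_two_condexp hm hg
  have e2 : ∫ ω, g ω * h ω ∂P = ∫ ω, p ω * h ω ∂P := integral_mul_condexp_eq hm hg hh hhm
  have hsq : (0:ℝ) ≤ ∫ ω, (p ω - h ω)^2 ∂P := integral_nonneg fun ω => sq_nonneg _
  rw [integral_sq_sub hp hh] at hsq
  rw [integral_sq_sub hg hh, e2]
  have hpp : ∫ ω, p ω^2 ∂P = ∫ ω, p ω * p ω ∂P := by
    congr 1; funext ω; ring
  linarith

lemma integral_sq_condexp_self {Ω : Type} [m : MeasurableSpace Ω] {P : Measure Ω}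
    [IsProbabilityMeasure P] {g : Ω → ℝ} (hg : MemLp g 2 P) :
    ∫ ω, (P[g|(m : MeasurableSpace Ω)]) ω^2 ∂P = ∫ ω, g ω^2 ∂P := by
  have hgm : AEStronglyMeasurable[m] g P :=
    ⟨hg.1.mk g, hg.1.stronglyMeasurable_mk, hg.1.ae_eq_mk⟩
  have h := condExp_of_aestronglyMeasurable' le_rfl hgm (hg.integrable one_le_two)
  refine integral_congr_ae ?_
  filter_upwards [h] with ω hω
  simp [hω]

lemma integral_sq_sub_condexp {Ω : Type} {𝒢 : MeasurableSpace Ω} [m : MeasurableSpace Ω]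
    {P : Measure Ω} [IsProbabilityMeasure P] (hm : 𝒢 ≤ m) {f : Ω → ℝ}
    (hf : MemLp f 2 P) :
    ∫ ω, (f ω - (P[f|𝒢]) ω)^2 ∂P
      = ∫ ω, f ω^2 ∂P - ∫ ω, (P[f|𝒢]) ω^2 ∂P := by
  set p := P[f|𝒢] with hp_def
  have hp : MemLp p 2 P := memℒp_two_condexp hm hf
  have hpm : AEStronglyMeasurable[𝒢] p P :=
    StronglyMeasurable.aestronglyMeasurable stronglyMeasurable_condExp
  have e1 : ∫ ω, f ω * p ω ∂P = ∫ ω, p ω * p ω ∂P := integral_mul_condexp_eq hm hf hp hpm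
  have hpp : ∫ ω, p ω^2 ∂P = ∫ ω, p ω * p ω ∂P := by congr 1; funext ω; ring
  rw [integral_sq_sub hf hp, e1]
  linarith

end Stmt17Aux

namespace Stmt17Aux

lemma measurableSet_nonempty_inter_closed {C : Set ℝ} (hC : IsClosed C) :
    MeasurableSet {M : SpectralSpaceCpt | (M.1 ∩ C).Nonempty} := by
  have hgen : ∀ U : Set ℝ, IsOpen U →
      MeasurableSet {M : SpectralSpaceCpt | (M.1 ∩ U).Nonempty} := fun U hU =>
    MeasurableSpace.measurableSet_generateFrom ⟨U, hU, rfl⟩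
  have key : {M : SpectralSpaceCpt | (M.1 ∩ C).Nonempty}
      = ⋂ n : ℕ, {M : SpectralSpaceCpt | (M.1 ∩ Metric.thickening (1/(n+1)) C).Nonempty} := by
    ext M
    simp only [Set.mem_iInter, Set.mem_setOf_eq]
    constructor
    · intro hne n
      exact hne.mono (Set.inter_subset_inter_right _
        (Metric.self_subset_thickening (by positivity) C))
    · intro hne
      set K : ℕ → Set ℝ := fun n => M.1 ∩ Metric.cthickening (1/(n+1)) C with hK
      have hmono : ∀ n : ℕ, K (n+1) ⊆ K n := by
        intro n
        refine Set.inter_subset_inter_right _ (Metric.cthickening_mono ?_ C)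
        rw [div_le_div_iff₀ (by positivity) (by positivity)]
        push_cast; nlinarith [Nat.cast_nonneg (α := ℝ) n]
      have hnem : ∀ n : ℕ, (K n).Nonempty := fun n =>
        (hne n).mono (Set.inter_subset_inter_right _ (Metric.thickening_subset_cthickening _ _))
      have hcl : ∀ n : ℕ, IsClosed (K n) := fun n =>
        M.2.isClosed.inter Metric.isClosed_cthickening
      have hcpt : IsCompact (K 0) := M.2.inter_right Metric.isClosed_cthickening
      obtain ⟨x, hx⟩ := IsCompact.nonempty_iInter_of_sequence_nonempty_isCompact_isClosed
        K hmono hnem hcpt hcl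
      simp only [Set.mem_iInter, hK, Set.mem_inter_iff] at hx
      have hxM : x ∈ M.1 := (hx 0).1
      have hinf : EMetric.infEdist x C = 0 := by
        have hle : ∀ n : ℕ, EMetric.infEdist x C ≤ ENNReal.ofReal (1/(n+1)) := fun n =>
          Metric.mem_cthickening_iff.mp (hx n).2
        have ht : Tendsto (fun n : ℕ => ENNReal.ofReal (1/((n:ℝ)+1))) atTop (nhds 0) := by
          rw [← ENNReal.ofReal_zero]
          exact (ENNReal.continuous_ofReal.tendsto 0).comp
            tendsto_one_div_add_atTop_nhds_zero_nat
        have := ge_of_tendsto ht (Eventually.of_forall hle)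
        simpa using this
      have hxC : x ∈ C := by
        rw [← hC.closure_eq]
        exact EMetric.mem_closure_iff_infEdist_zero.mpr hinf
      exact ⟨x, hxM, hxC⟩
  rw [key]
  exact MeasurableSet.iInter fun n => hgen _ Metric.isOpen_thickening

lemma isOpen_erealIoo (a b : EReal) : IsOpen (erealIoo a b) := by
  have : erealIoo a b = ((↑) : ℝ → EReal) ⁻¹' (Set.Ioo a b) := rfl
  rw [this]
  exact isOpen_Ioo.preimage continuous_coe_real_ereal

lemma measurableSet_subsetElem (E : Elementary) :
    MeasurableSet {M : SpectralSpaceCpt | M.1 ⊆ E.set} := by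
  have hopen : IsOpen E.set := isOpen_iUnion fun i => isOpen_erealIoo _ _
  have : {M : SpectralSpaceCpt | M.1 ⊆ E.set}
      = {M : SpectralSpaceCpt | (M.1 ∩ E.setᶜ).Nonempty}ᶜ := by
    ext M
    simp only [Set.mem_setOf_eq, Set.mem_compl_iff, Set.not_nonempty_iff_eq_empty,
      ← Set.disjoint_iff_inter_eq_empty, Set.disjoint_compl_right_iff_subset]
  rw [this]
  exact (measurableSet_nonempty_inter_closed hopen.isClosed_compl).compl

lemma compl_subsetElem (E : Elementary) :
    {M : SpectralSpaceCpt | ¬ M.1 ⊆ E.set} = {M : SpectralSpaceCpt | M.1 ⊆ E.set}ᶜ := rfl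

end Stmt17Aux

open Stmt17Aux in
/-- Lemma 5.5. If `g = η ∘ f` with `η : ℝ → ℝ` a `1`-Lipschitz
function, then `μ_g(𝒞 ∖ ℳ_E) ≤ μ_f(𝒞 ∖ ℳ_E)` for every elementary set `E`. -/
theorem statement17 {Ω : Type} [m : MeasurableSpace Ω] (P : Measure Ω) [IsProbabilityMeasure P]
    (CF : ContinuousFactorization Ω P) (f g : Ω → ℝ) (hf : MemLp f 2 P)
    (η : ℝ → ℝ) (hη : ∀ x y : ℝ, |η x - η y| ≤ |x - y|) (hg : g = η ∘ f)
    (μf μg : Measure SpectralSpaceCpt)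
    (hμf : CF.IsSpectralMeasure f μf) (hμg : CF.IsSpectralMeasure g μg) :
    ∀ E : Elementary,
      μg {M : SpectralSpaceCpt | ¬ M.1 ⊆ E.set} ≤ μf {M : SpectralSpaceCpt | ¬ M.1 ⊆ E.set} := by
  classical
  haveI := hμf.1
  haveI := hμg.1
  intro E
  have hηL : LipschitzWith 1 η := LipschitzWith.of_dist_le_mul fun x y => by
    simpa [Real.dist_eq, one_mul] using hη x y
  have hcomp2 : ∀ u : Ω → ℝ, MemLp u 2 P → MemLp (fun ω => η (u ω)) 2 P := by
    intro u hu
    have h1 : LipschitzWith 1 (fun x => η x - η 0) := by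
      refine LipschitzWith.of_dist_le_mul fun x y => ?_
      simpa [Real.dist_eq, one_mul] using hη x y
    have h2 : MemLp ((fun x => η x - η 0) ∘ u) 2 P := h1.comp_memLp (by simp) hu
    have h3 : (fun ω => η (u ω)) = ((fun x => η x - η 0) ∘ u) + fun _ => η 0 := by
      funext ω; simp
    rw [h3]
    exact h2.add (memLp_const _)
  have hgL2 : MemLp g 2 P := by rw [hg]; exact hcomp2 f hf
  have hGle : CF.FE E ≤ m := iSup_le fun i => iSup_le fun s => iSup_le fun t =>
    iSup_le fun _ => iSup_le fun _ => iSup_le fun _ => CF.le_ambient s t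
  set Efull : Elementary := ⟨1, fun _ => ⊥, fun _ => ⊤,
    fun i j hij => absurd (Subsingleton.elim i j) hij⟩ with hEfull
  have hset : Efull.set = Set.univ := by
    ext x
    simp only [Elementary.set, Set.mem_iUnion, Set.mem_univ, iff_true]
    exact ⟨0, EReal.bot_lt_coe x, EReal.coe_lt_top x⟩
  have hFEfull : CF.FE Efull = m := by
    refine le_antisymm (iSup_le fun i => iSup_le fun s => iSup_le fun t =>
      iSup_le fun _ => iSup_le fun _ => iSup_le fun _ => CF.le_ambient s t) ?_
    conv_lhs => rw [← CF.ambient_eq]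
    refine iSup_le fun n => le_trans ?_
      (le_iSup (fun i : Fin 1 => CF.FI (Efull.a i) (Efull.b i)) 0)
    refine le_iSup_of_le (-(n:ℝ)) (le_iSup_of_le (n:ℝ) ?_)
    refine le_iSup_of_le (neg_le_self (Nat.cast_nonneg n)) ?_
    exact le_iSup_of_le bot_le (le_iSup_of_le le_top le_rfl)
  have hμg_univ : μg Set.univ = ENNReal.ofReal (∫ ω, g ω^2 ∂P) := by
    have h0 := hμg.2 Efull
    rw [hset] at h0
    simpa [hFEfull, Set.subset_univ, Set.setOf_true,
      integral_sq_condexp_self hgL2] using h0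
  have hμf_univ : μf Set.univ = ENNReal.ofReal (∫ ω, f ω^2 ∂P) := by
    have h0 := hμf.2 Efull
    rw [hset] at h0
    simpa [hFEfull, Set.subset_univ, Set.setOf_true,
      integral_sq_condexp_self hf] using h0
  have hSmeas := measurableSet_subsetElem E
  rw [compl_subsetElem E, measure_compl hSmeas (measure_ne_top _ _),
    measure_compl hSmeas (measure_ne_top _ _), hμg_univ, hμf_univ, hμg.2 E, hμf.2 E]
  have hnn1 : (0:ℝ) ≤ ∫ ω, (P[g|CF.FE E]) ω^2 ∂P := integral_nonneg fun ω => sq_nonneg _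
  have hnn2 : (0:ℝ) ≤ ∫ ω, (P[f|CF.FE E]) ω^2 ∂P := integral_nonneg fun ω => sq_nonneg _
  rw [← ENNReal.ofReal_sub _ hnn1, ← ENNReal.ofReal_sub _ hnn2]
  apply ENNReal.ofReal_le_ofReal
  set h : Ω → ℝ := fun ω => η ((P[f|CF.FE E]) ω) with hh_def
  have hpf : MemLp (P[f|CF.FE E]) 2 P := memℒp_two_condexp hGle hf
  have hhL2 : MemLp h 2 P := hcomp2 _ hpf
  have hhm : AEStronglyMeasurable[CF.FE E] h P :=
    StronglyMeasurable.aestronglyMeasurable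
      (hηL.continuous.comp_stronglyMeasurable stronglyMeasurable_condExp)
  have step1 := condexp_contraction hGle hgL2 hhL2 hhm
  have step2 : ∫ ω, (g ω - h ω)^2 ∂P ≤ ∫ ω, (f ω - (P[f|CF.FE E]) ω)^2 ∂P := by
    refine integral_mono ((hgL2.sub hhL2).integrable_sq) ((hf.sub hpf).integrable_sq) ?_
    intro ω
    have hb := hη (f ω) ((P[f|CF.FE E]) ω)
    show (g ω - h ω)^2 ≤ (f ω - (P[f|CF.FE E]) ω)^2
    have heq : g ω - h ω = η (f ω) - η ((P[f|CF.FE E]) ω) := by rw [hg]; rfl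
    rw [heq, ← sq_abs (η (f ω) - _), ← sq_abs (f ω - _)]
    exact pow_le_pow_left₀ (abs_nonneg _) hb 2
  have step3 := integral_sq_sub_condexp hGle hf
  linarith [step1, step2, step3]
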